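/- arXiv:2302.14129 — 5 statements merged into one kernel-verified Lean document; each statement's English description precedes it below -/
import Mathlib

section
/- If a finite simple graph G has a vertex of degree 1 (a pendant vertex), then the strong domatic number of G is either 1 or 2. -/
open SimpleGraph

open scoped Classical

/-- `D` is a strong dominating set: every vertex outside `D` has a neighbor in `D`
of at least its own degree. -/
def IsStrongDominating {V : Type*} [Fintype V] (G : SimpleGraph V) (D : Set V) : Prop :=
  ∀ x ∉ D, ∃ y ∈ D, G.Adj x y ∧ G.degree x ≤ G.degree y

/-- The strong domatic number: the largest `n` such that the vertex set can be
partitioned into `n` strong dominating sets (as fibers of a map to `Fin n`). -/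
noncomputable def strongDomatic {V : Type*} [Fintype V] (G : SimpleGraph V) : ℕ :=
  sSup {n | ∃ f : V → Fin n, ∀ i : Fin n, IsStrongDominating G (f ⁻¹' {i})}

theorem stmt_0 {V : Type*} [Fintype V] (G : SimpleGraph V) (v : V) (hv : G.degree v = 1) :
    strongDomatic G = 1 ∨ strongDomatic G = 2 := by
  set S := {n | ∃ f : V → Fin n, ∀ i : Fin n, IsStrongDominating G (f ⁻¹' {i})} with hS
  -- unique neighbor u of v
  obtain ⟨u, hu⟩ : ∃ u, G.neighborFinset v = {u} := by
    rw [← Finset.card_eq_one, ← SimpleGraph.degree]; exact hv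
  have hadj : ∀ y, G.Adj v y → y = u := by
    intro y hy
    have : y ∈ G.neighborFinset v := by rwa [SimpleGraph.mem_neighborFinset]
    rw [hu, Finset.mem_singleton] at this; exact this
  have h1 : 1 ∈ S := by
    refine ⟨fun _ => 0, fun i x hx => ?_⟩
    exact absurd (show (fun _ => (0 : Fin 1)) x ∈ ({i} : Set (Fin 1)) from
      Set.mem_singleton_iff.2 (Subsingleton.elim _ _)) hx
  have h2 : ∀ n ∈ S, n ≤ 2 := by
    rintro n ⟨f, hf⟩
    have hcover : ∀ i : Fin n, i = f v ∨ i = f u := by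
      intro i
      by_cases hvi : f v = i
      · exact Or.inl hvi.symm
      · obtain ⟨y, hy, hadjy, _⟩ := hf i v (by simpa using hvi)
        have := hadj y hadjy
        subst this
        exact Or.inr (Set.mem_singleton_iff.1 hy).symm
    have : (Finset.univ : Finset (Fin n)) ⊆ {f v, f u} := by
      intro i _
      rcases hcover i with h | h <;> simp [h]
    calc n = (Finset.univ : Finset (Fin n)).card := by simp
      _ ≤ ({f v, f u} : Finset (Fin n)).card := Finset.card_le_card this
      _ ≤ 2 := Finset.card_insert_le _ _ |>.trans (by simp)
  have hbdd : BddAbove S := ⟨2, fun n hn => h2 n hn⟩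
  have hle : sSup S ≤ 2 := csSup_le ⟨1, h1⟩ h2
  have hge : 1 ≤ sSup S := le_csSup hbdd h1
  unfold strongDomatic
  rw [← hS]
  omega
end

section
/- For the path graph P_n with n ≥ 4, the strong domatic number equals 2. -/
open SimpleGraph

open scoped Classical

lemma pg_deg_le_two {n : ℕ} (hn : 1 ≤ n) (x : Fin n) : (pathGraph n).degree x ≤ 2 := by
  have h : (pathGraph n).neighborFinset x ⊆
      {⟨x.val - 1, by omega⟩, ⟨min (x.val + 1) (n - 1), by omega⟩} := by
    intro y hy
    rw [SimpleGraph.mem_neighborFinset, pathGraph_adj] at hy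
    have hy2 := y.isLt
    simp only [Finset.mem_insert, Finset.mem_singleton]
    rcases hy with h | h
    · right; apply Fin.ext; simp; omega
    · left; apply Fin.ext; simp; omega
  have := Finset.card_le_card h
  have h2 : ({⟨x.val - 1, by omega⟩, ⟨min (x.val + 1) (n - 1), by omega⟩} :
      Finset (Fin n)).card ≤ 2 := by
    refine (Finset.card_insert_le _ _).trans ?_
    simp
  exact le_trans this h2

lemma pg_deg_interior {n : ℕ} (y : Fin n) (h0 : 0 < y.val) (h1 : y.val + 1 < n) :
    (pathGraph n).degree y = 2 := by
  have h : (pathGraph n).neighborFinset y =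
      {⟨y.val - 1, by omega⟩, ⟨y.val + 1, by omega⟩} := by
    ext z
    rw [SimpleGraph.mem_neighborFinset, pathGraph_adj]
    simp only [Finset.mem_insert, Finset.mem_singleton, Fin.ext_iff]
    omega
  show ((pathGraph n).neighborFinset y).card = 2
  rw [h, Finset.card_insert_of_notMem (by simp only [Finset.mem_singleton, Fin.mk.injEq]; omega),
    Finset.card_singleton]

theorem stmt_5 (n : ℕ) (hn : 4 ≤ n) :
    strongDomatic (pathGraph n) = 2 := by
  set S := {m | ∃ f : Fin n → Fin m, ∀ i : Fin m,
    IsStrongDominating (pathGraph n) (f ⁻¹' {i})} with hS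
  have hub : ∀ k ∈ S, k ≤ 2 := by
    rintro k ⟨f, hf⟩
    by_contra hk
    push_neg at hk
    have key : ∀ i : Fin k, f ⟨0, by omega⟩ = i ∨ f ⟨1, by omega⟩ = i := by
      intro i
      by_cases h0 : f ⟨0, by omega⟩ = i
      · exact Or.inl h0
      · obtain ⟨y, hy, hadj, _⟩ := hf i ⟨0, by omega⟩ (by simpa using h0)
        right
        have hy1 : y = ⟨1, by omega⟩ := by
          rw [pathGraph_adj] at hadj
          apply Fin.ext
          simp at hadj ⊢
          omega
        rw [hy1] at hy
        simpa using hy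
    have hsub : (Finset.univ : Finset (Fin k)) ⊆
        {f ⟨0, by omega⟩, f ⟨1, by omega⟩} := by
      intro i _
      rcases key i with h | h <;> simp [← h]
    have hcard := Finset.card_le_card hsub
    have h2 : ({f ⟨0, by omega⟩, f ⟨1, by omega⟩} : Finset (Fin k)).card ≤ 2 := by
      refine (Finset.card_insert_le _ _).trans ?_
      simp
    rw [Finset.card_univ, Fintype.card_fin] at hcard
    omega
  have hmem : 2 ∈ S := by
    refine ⟨fun v => ⟨v.val % 2, by omega⟩, ?_⟩
    intro i x hx
    have hx' : x.val % 2 ≠ i.val := by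
      intro h
      exact hx (by simp [Set.mem_preimage, Fin.ext_iff, h])
    obtain ⟨y, hadj, hy0, hy1, hpar⟩ : ∃ y : Fin n, (pathGraph n).Adj x y ∧
        0 < y.val ∧ y.val + 1 < n ∧ y.val % 2 ≠ x.val % 2 := by
      have hxlt := x.isLt
      rcases Nat.lt_or_ge x.val 2 with hx2 | hx2
      · rcases Nat.lt_or_ge x.val 1 with hx1 | hx1
        · refine ⟨⟨1, by omega⟩, ?_, ?_, ?_, ?_⟩ <;>
            first
            | (simp only [Fin.val_mk]; omega)
            | (rw [pathGraph_adj]; simp only [Fin.val_mk]; omega)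
        · refine ⟨⟨2, by omega⟩, ?_, ?_, ?_, ?_⟩ <;>
            first
            | (simp only [Fin.val_mk]; omega)
            | (rw [pathGraph_adj]; simp only [Fin.val_mk]; omega)
      · refine ⟨⟨x.val - 1, by omega⟩, ?_, ?_, ?_, ?_⟩ <;>
          first
          | (simp only [Fin.val_mk]; omega)
          | (rw [pathGraph_adj]; simp only [Fin.val_mk]; omega)
    refine ⟨y, ?_, hadj, ?_⟩
    · have := i.isLt
      simp only [Set.mem_preimage, Set.mem_singleton_iff, Fin.ext_iff, Fin.val_mk]
      omega
    · rw [pg_deg_interior y hy0 hy1]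
      exact pg_deg_le_two (by omega) x
  have h1 : strongDomatic (pathGraph n) ≤ 2 := csSup_le ⟨2, hmem⟩ hub
  have h2 : 2 ≤ strongDomatic (pathGraph n) := le_csSup ⟨2, hub⟩ hmem
  omega
end

section
/- For the complete bipartite graph K_{n,m} with n < m, the strong domatic number equals 1. -/
open SimpleGraph

open scoped Classical

lemma deg_inl (n m : ℕ) (a : Fin n) :
    (completeBipartiteGraph (Fin n) (Fin m)).degree (Sum.inl a) = m := by
  rw [← card_neighborFinset_eq_degree]
  have : (completeBipartiteGraph (Fin n) (Fin m)).neighborFinset (Sum.inl a)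
      = Finset.univ.map ⟨Sum.inr, Sum.inr_injective⟩ := by
    ext y; cases y <;> simp
  simp [this]

lemma deg_inr (n m : ℕ) (b : Fin m) :
    (completeBipartiteGraph (Fin n) (Fin m)).degree (Sum.inr b) = n := by
  rw [← card_neighborFinset_eq_degree]
  have : (completeBipartiteGraph (Fin n) (Fin m)).neighborFinset (Sum.inr b)
      = Finset.univ.map ⟨Sum.inl, Sum.inl_injective⟩ := by
    ext y; cases y <;> simp
  simp [this]

theorem stmt_7 (n m : ℕ) (h : n < m) :
    strongDomatic (completeBipartiteGraph (Fin n) (Fin m)) = 1 := by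
  have hm : 0 < m := by omega
  unfold strongDomatic
  have h1 : (1 : ℕ) ∈ {k | ∃ f : (Fin n ⊕ Fin m) → Fin k,
      ∀ i : Fin k, IsStrongDominating (completeBipartiteGraph (Fin n) (Fin m)) (f ⁻¹' {i})} := by
    refine ⟨fun _ => 0, fun i x hx => absurd ?_ hx⟩
    simp [Subsingleton.elim i 0]
  have hub : ∀ k ∈ {k | ∃ f : (Fin n ⊕ Fin m) → Fin k,
      ∀ i : Fin k, IsStrongDominating (completeBipartiteGraph (Fin n) (Fin m)) (f ⁻¹' {i})},
      k ≤ 1 := by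
    rintro k ⟨f, hf⟩
    by_contra hk
    push_neg at hk
    -- pick a vertex x and an index i ≠ f x
    have : ∃ x : Fin n ⊕ Fin m, ∀ y, (completeBipartiteGraph (Fin n) (Fin m)).Adj x y →
        ¬ (completeBipartiteGraph (Fin n) (Fin m)).degree x
            ≤ (completeBipartiteGraph (Fin n) (Fin m)).degree y := by
      rcases Nat.eq_zero_or_pos n with hn | hn
      · refine ⟨Sum.inr ⟨0, hm⟩, fun y hy => ?_⟩
        cases y with
        | inl a => exact absurd a.2 (by omega)
        | inr b => simp at hy
      · refine ⟨Sum.inl ⟨0, hn⟩, fun y hy => ?_⟩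
        cases y with
        | inl a => simp at hy
        | inr b => rw [deg_inl, deg_inr]; omega
    obtain ⟨x, hx⟩ := this
    have hne : ∃ i : Fin k, i ≠ f x := by
      refine ⟨if f x = ⟨0, by omega⟩ then ⟨1, by omega⟩ else ⟨0, by omega⟩, ?_⟩
      split <;> simp_all <;> omega
    obtain ⟨i, hi⟩ := hne
    obtain ⟨y, _, hadj, hdeg⟩ := hf i x (by simp [Ne.symm hi])
    exact hx y hadj hdeg
  exact le_antisymm (csSup_le ⟨1, h1⟩ hub) (le_csSup ⟨1, hub⟩ h1)
end

section
/- For the book graph B_n with n ≥ 2, the strong domatic number equals 2. -/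
open SimpleGraph

open scoped Classical

/-- The book graph `B n`: `n` quadrilaterals sharing the common edge between the
two hub vertices `Sum.inl 0` and `Sum.inl 1`; the `i`-th page has vertices
`Sum.inr (i,0)` (adjacent to hub `0`) and `Sum.inr (i,1)` (adjacent to hub `1`). -/
def bookGraph (n : ℕ) : SimpleGraph (Fin 2 ⊕ (Fin n × Fin 2)) :=
  SimpleGraph.fromRel fun a b =>
    (a = Sum.inl 0 ∧ b = Sum.inl 1) ∨
    (∃ i : Fin n, (a = Sum.inl 0 ∧ b = Sum.inr (i, 0)) ∨
      (a = Sum.inl 1 ∧ b = Sum.inr (i, 1)) ∨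
      (a = Sum.inr (i, 0) ∧ b = Sum.inr (i, 1)))



lemma adj0 (n : ℕ) (x : Fin 2 ⊕ (Fin n × Fin 2)) :
    (bookGraph n).Adj (Sum.inl 0) x ↔ (x = Sum.inl 1 ∨ ∃ i, x = Sum.inr (i, 0)) := by
  simp [bookGraph, fromRel_adj]
  rintro (rfl | ⟨i, rfl⟩) <;> simp

lemma adj1 (n : ℕ) (x : Fin 2 ⊕ (Fin n × Fin 2)) :
    (bookGraph n).Adj (Sum.inl 1) x ↔ (x = Sum.inl 0 ∨ ∃ i, x = Sum.inr (i, 1)) := by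
  simp [bookGraph, fromRel_adj]
  constructor
  · rintro ⟨-, (⟨i, rfl⟩ | rfl)⟩ <;> simp
  · rintro (rfl | ⟨i, rfl⟩) <;> simp

lemma adjp0 (n : ℕ) (i : Fin n) (x : Fin 2 ⊕ (Fin n × Fin 2)) :
    (bookGraph n).Adj (Sum.inr (i, 0)) x ↔ (x = Sum.inl 0 ∨ x = Sum.inr (i, 1)) := by
  simp [bookGraph, fromRel_adj]
  constructor
  · rintro ⟨-, (rfl | rfl)⟩ <;> simp
  · rintro (rfl | rfl) <;> simp

lemma adjp1 (n : ℕ) (i : Fin n) (x : Fin 2 ⊕ (Fin n × Fin 2)) :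
    (bookGraph n).Adj (Sum.inr (i, 1)) x ↔ (x = Sum.inl 1 ∨ x = Sum.inr (i, 0)) := by
  simp [bookGraph, fromRel_adj]
  constructor
  · rintro ⟨-, j, (⟨rfl, rfl⟩ | ⟨rfl, rfl⟩)⟩ <;> simp
  · rintro (rfl | rfl) <;> simp

lemma deg0 (n : ℕ) : (bookGraph n).degree (Sum.inl 0) = n + 1 := by
  have h : (bookGraph n).neighborFinset (Sum.inl 0) =
      insert (Sum.inl 1) (Finset.univ.image fun i : Fin n => Sum.inr (i, 0)) := by
    ext x
    simp [mem_neighborFinset, adj0, eq_comm]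
  rw [SimpleGraph.degree, h, Finset.card_insert_of_notMem (by simp),
    Finset.card_image_of_injective _ (fun a b hab => by simpa using hab)]
  simp [Nat.add_comm]

lemma deg1 (n : ℕ) : (bookGraph n).degree (Sum.inl 1) = n + 1 := by
  have h : (bookGraph n).neighborFinset (Sum.inl 1) =
      insert (Sum.inl 0) (Finset.univ.image fun i : Fin n => Sum.inr (i, 1)) := by
    ext x
    simp [mem_neighborFinset, adj1, eq_comm]
  rw [SimpleGraph.degree, h, Finset.card_insert_of_notMem (by simp),
    Finset.card_image_of_injective _ (fun a b hab => by simpa using hab)]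
  simp [Nat.add_comm]

lemma degp0 (n : ℕ) (i : Fin n) : (bookGraph n).degree (Sum.inr (i, 0)) = 2 := by
  have h : (bookGraph n).neighborFinset (Sum.inr (i, 0)) =
      {Sum.inl 0, Sum.inr (i, 1)} := by
    ext x
    simp [mem_neighborFinset, adjp0]
  rw [SimpleGraph.degree, h]
  simp

lemma degp1 (n : ℕ) (i : Fin n) : (bookGraph n).degree (Sum.inr (i, 1)) = 2 := by
  have h : (bookGraph n).neighborFinset (Sum.inr (i, 1)) =
      {Sum.inl 1, Sum.inr (i, 0)} := by
    ext x
    simp [mem_neighborFinset, adjp1]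
  rw [SimpleGraph.degree, h]
  simp

theorem stmt_10 (n : ℕ) (hn : 2 ≤ n) :
    strongDomatic (bookGraph n) = 2 := by
  set S := {m | ∃ f : (Fin 2 ⊕ (Fin n × Fin 2)) → Fin m,
      ∀ i : Fin m, IsStrongDominating (bookGraph n) (f ⁻¹' {i})} with hS
  have h2 : 2 ∈ S := by
    refine ⟨Sum.elim (fun j => j) (fun p => p.2 + 1), ?_⟩
    intro i x hx
    simp only [Set.mem_preimage, Set.mem_singleton_iff] at hx
    fin_cases i
    · rcases x with j | ⟨i', k⟩
      · fin_cases j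
        · simp at hx
        · exact ⟨Sum.inl 0, by simp, (adj1 n _).mpr (Or.inl rfl), le_of_eq ((deg1 n).trans (deg0 n).symm)⟩
      · fin_cases k
        · exact ⟨Sum.inr (i', 1), by simp, (adjp0 n i' _).mpr (Or.inr rfl), le_of_eq ((degp0 n i').trans (degp1 n i').symm)⟩
        · simp at hx
    · rcases x with j | ⟨i', k⟩
      · fin_cases j
        · exact ⟨Sum.inl 1, by simp, (adj0 n _).mpr (Or.inl rfl), le_of_eq ((deg0 n).trans (deg1 n).symm)⟩
        · simp at hx
      · fin_cases k
        · simp at hx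
        · exact ⟨Sum.inr (i', 0), by simp, (adjp1 n i' _).mpr (Or.inr rfl), le_of_eq ((degp1 n i').trans (degp0 n i').symm)⟩
  have hub : ∀ m ∈ S, m ≤ 2 := by
    rintro m ⟨f, hf⟩
    have claim : ∀ i : Fin m, i = f (Sum.inl 0) ∨ i = f (Sum.inl 1) := by
      intro i
      by_cases h0 : f (Sum.inl 0) = i
      · exact Or.inl h0.symm
      · have hmem : Sum.inl 0 ∉ f ⁻¹' {i} := by simpa using h0
        obtain ⟨y, hy, hadj, hdeg⟩ := hf i (Sum.inl 0) hmem
        rw [adj0] at hadj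
        rcases hadj with rfl | ⟨j, rfl⟩
        · have hy' : f (Sum.inl 1) = i := by simpa using hy
          exact Or.inr hy'.symm
        · rw [deg0, degp0] at hdeg; omega
    have hsub : (Finset.univ : Finset (Fin m)) ⊆ {f (Sum.inl 0), f (Sum.inl 1)} := by
      intro i _
      rcases claim i with h | h <;> simp [h]
    have := Finset.card_le_card hsub
    have hle : ({f (Sum.inl 0), f (Sum.inl 1)} : Finset (Fin m)).card ≤ 2 :=
      (Finset.card_insert_le _ _).trans (by simp)
    simpa using this.trans hle
  rw [strongDomatic, ← hS]
  exact le_antisymm (csSup_le ⟨2, h2⟩ hub) (le_csSup ⟨2, hub⟩ h2)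
end

section
/- In the Petersen graph, there is no partition of the vertex set into three dominating sets. -/
open SimpleGraph

open scoped Classical

/-- The Petersen graph: outer 5-cycle on `Sum.inl i`, inner pentagram on `Sum.inr i`
(`Sum.inr i` adjacent to `Sum.inr (i+2)`), and spokes `Sum.inl i — Sum.inr i`. -/
def petersenGraph : SimpleGraph (ZMod 5 ⊕ ZMod 5) :=
  SimpleGraph.fromRel fun x y =>
    match x, y with
    | Sum.inl i, Sum.inl j => j = i + 1
    | Sum.inr i, Sum.inr j => j = i + 2
    | Sum.inl i, Sum.inr j => i = j
    | Sum.inr _, Sum.inl _ => False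

/-- `D` is a dominating set: every vertex outside `D` has a neighbor in `D`. -/
def IsDominating {V : Type*} (G : SimpleGraph V) (D : Set V) : Prop :=
  ∀ x ∉ D, ∃ y ∈ D, G.Adj x y

instance : DecidableRel petersenGraph.Adj := fun x y => by
  unfold petersenGraph
  rw [SimpleGraph.fromRel_adj]
  cases x <;> cases y <;> exact inferInstanceAs (Decidable _)

/-- For a color `i`, each of the ten closed neighborhoods of the Petersen graph
(arguments `a0,…,a4` are the colors of the outer vertices, `b0,…,b4` of the inner
ones) contains a vertex of color `i`. -/
def dOK (i a0 a1 a2 a3 a4 b0 b1 b2 b3 b4 : Fin 3) : Bool :=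
  (a0 == i || a1 == i || a4 == i || b0 == i) &&
  (a1 == i || a2 == i || a0 == i || b1 == i) &&
  (a2 == i || a3 == i || a1 == i || b2 == i) &&
  (a3 == i || a4 == i || a2 == i || b3 == i) &&
  (a4 == i || a0 == i || a3 == i || b4 == i) &&
  (b0 == i || b2 == i || b3 == i || a0 == i) &&
  (b1 == i || b3 == i || b4 == i || a1 == i) &&
  (b2 == i || b4 == i || b0 == i || a2 == i) &&
  (b3 == i || b0 == i || b1 == i || a3 == i) &&
  (b4 == i || b1 == i || b2 == i || a4 == i)

/-- All three color classes of the given 3-coloring are dominating sets. -/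
def check10 (a0 a1 a2 a3 a4 b0 b1 b2 b3 b4 : Fin 3) : Bool :=
  dOK 0 a0 a1 a2 a3 a4 b0 b1 b2 b3 b4 &&
  dOK 1 a0 a1 a2 a3 a4 b0 b1 b2 b3 b4 &&
  dOK 2 a0 a1 a2 a3 a4 b0 b1 b2 b3 b4

set_option maxRecDepth 1000000 in
set_option maxHeartbeats 16000000 in
lemma keyF : ∀ c0 c1 c2 c3 c4 c5 c6 c7 c8 c9 : Fin 3,
    check10 c0 c1 c2 c3 c4 c5 c6 c7 c8 c9 = false := by decide

theorem stmt_19 :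
    ¬ ∃ f : (ZMod 5 ⊕ ZMod 5) → Fin 3,
        ∀ i : Fin 3, IsDominating petersenGraph (f ⁻¹' {i}) := by
  rintro ⟨f, hf⟩
  have h : ∀ i : Fin 3, ∀ x, f x ≠ i → ∃ y, f y = i ∧ petersenGraph.Adj x y := by
    intro i x hx
    obtain ⟨y, hy, hadj⟩ := hf i x (by simpa using hx)
    exact ⟨y, by simpa using hy, hadj⟩
  have dom_disj : ∀ (i : Fin 3) (x y1 y2 y3 : ZMod 5 ⊕ ZMod 5),
      (∀ y, petersenGraph.Adj x y → y = y1 ∨ y = y2 ∨ y = y3) →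
      ((f x = i ∨ f y1 = i) ∨ f y2 = i) ∨ f y3 = i := by
    intro i x y1 y2 y3 hn
    by_cases hx : f x = i
    · exact Or.inl (Or.inl (Or.inl hx))
    · obtain ⟨y, hy, hadj⟩ := h i x hx
      rcases hn y hadj with rfl | rfl | rfl
      · exact Or.inl (Or.inl (Or.inr hy))
      · exact Or.inl (Or.inr hy)
      · exact Or.inr hy
  have hkey := keyF (f (.inl 0)) (f (.inl 1)) (f (.inl 2)) (f (.inl 3)) (f (.inl 4))
      (f (.inr 0)) (f (.inr 1)) (f (.inr 2)) (f (.inr 3)) (f (.inr 4))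
  have htrue : check10 (f (.inl 0)) (f (.inl 1)) (f (.inl 2)) (f (.inl 3)) (f (.inl 4))
      (f (.inr 0)) (f (.inr 1)) (f (.inr 2)) (f (.inr 3)) (f (.inr 4)) = true := by
    simp only [check10, dOK, Bool.and_eq_true, Bool.or_eq_true, beq_iff_eq]
    repeat' apply And.intro
    all_goals refine dom_disj _ _ _ _ _ ?_
    all_goals decide
  rw [htrue] at hkey
  exact absurd hkey (by simp)
end
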